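/- arXiv:1909.12142 — 7 statements merged into one kernel-verified Lean document; each statement's English description precedes it below -/
import Mathlib

section
/- For an operator o in TNF and a binary feature f = f_o ∧ f_ō, where f_o is a fact on a variable in vars(o) and f_ō is a fact on a variable outside vars(o), for every state s in which o is applicable: Δ_o(f,s) = ([pre(o) ⊨ f_o] − [eff(o) ⊨ f_o]) · [s ⊨ f_ō]. -/
abbrev PState (V : Type) (D : V → Type) := ∀ v, D v
abbrev PAssign (V : Type) (D : V → Type) := ∀ v, Option (D v)

def Models {V : Type} {D : V → Type} (s : PState V D) (f : PAssign V D) : Prop :=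
  ∀ v, ∀ x ∈ f v, s v = x

instance {V : Type} {D : V → Type} [Fintype V] [∀ v, DecidableEq (D v)]
    (s : PState V D) (f : PAssign V D) : Decidable (Models s f) := by
  unfold Models; infer_instance

structure Op (V : Type) (D : V → Type) where
  pre : PAssign V D
  eff : PAssign V D
  cost : ℝ
  tnf : ∀ v, (pre v).isSome ↔ (eff v).isSome
  cost_nonneg : 0 ≤ cost

def Op.applicable {V : Type} {D : V → Type} (o : Op V D) (s : PState V D) : Prop :=
  Models s o.pre

def Op.res {V : Type} {D : V → Type} (o : Op V D) (s : PState V D) : PState V D :=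
  fun v => (o.eff v).getD (s v)

noncomputable def delta {V : Type} {D : V → Type} [Fintype V] [∀ v, DecidableEq (D v)]
    (o : Op V D) (f : PAssign V D) (s : PState V D) : ℝ :=
  (if Models s f then 1 else 0) - (if Models (o.res s) f then 1 else 0)

/-- For a binary feature `f = f_o ∧ f_ō` with `f_o` a fact `(v₀, x₀)` on a variable of
`vars(o)` and `f_ō` a fact `(v₁, x₁)` on a variable outside `vars(o)`:
`Δ_o(f,s) = ([pre(o) ⊨ f_o] − [eff(o) ⊨ f_o]) · [s ⊨ f_ō]` whenever `o` is applicable in `s`. -/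
theorem stmt5 {V : Type} {D : V → Type} [Fintype V] [∀ v, DecidableEq (D v)]
    (o : Op V D) (f : PAssign V D)
    (v₀ v₁ : V) (x₀ : D v₀) (x₁ : D v₁)
    (hin : (o.pre v₀).isSome) (hout : (o.pre v₁).isNone)
    (hf₀ : f v₀ = some x₀) (hf₁ : f v₁ = some x₁)
    (hother : ∀ v, v ≠ v₀ → v ≠ v₁ → f v = none)
    (s : PState V D) (happ : o.applicable s) :
    delta o f s =
      ((if o.pre v₀ = some x₀ then (1 : ℝ) else 0) -
        (if o.eff v₀ = some x₀ then (1 : ℝ) else 0)) *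
      (if s v₁ = x₁ then (1 : ℝ) else 0) := by
  have hne : v₀ ≠ v₁ := by
    intro h; subst h; rw [Option.isNone_iff_eq_none] at hout; simp [hout] at hin
  have hmod : ∀ t : PState V D, Models t f ↔ (t v₀ = x₀ ∧ t v₁ = x₁) := by
    intro t
    constructor
    · intro h; exact ⟨h v₀ x₀ hf₀, h v₁ x₁ hf₁⟩
    · rintro ⟨h0, h1⟩ v x hx
      by_cases hv0 : v = v₀
      · subst hv0; rw [hf₀] at hx; cases hx; exact h0
      by_cases hv1 : v = v₁
      · subst hv1; rw [hf₁] at hx; cases hx; exact h1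
      · rw [hother v hv0 hv1] at hx; cases hx
  have heff₁ : o.eff v₁ = none := by
    have := (o.tnf v₁).mpr
    rw [Option.isNone_iff_eq_none] at hout
    cases h : o.eff v₁ with
    | none => rfl
    | some y => exfalso; have := this (by rw [h]; rfl); rw [hout] at this; simp at this
  obtain ⟨p, hp⟩ := Option.isSome_iff_exists.mp hin
  obtain ⟨e, he⟩ := Option.isSome_iff_exists.mp ((o.tnf v₀).mp hin)
  have hs0 : s v₀ = p := happ v₀ p hp
  have hres0 : o.res s v₀ = e := by simp [Op.res, he]
  have hres1 : o.res s v₁ = s v₁ := by simp [Op.res, heff₁]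
  simp only [delta, hmod, hres0, hres1, hs0, hp, he, Option.some.injEq]
  by_cases h1 : s v₁ = x₁ <;> by_cases h2 : p = x₀ <;> by_cases h3 : e = x₀ <;>
    simp [h1, h2, h3]
end

section
/- Let X be a finite set of finite-domain variables and Ψ a finite set of scoped real-valued functions ⟨S, ψ⟩ with S ⊆ X. For any ordering σ of X, the bucket elimination procedure — which repeatedly eliminates the σ-largest variable X_i by replacing all functions whose scope's largest variable is X_i with the single function ψ_{X_i}(ν) = max_{x ∈ dom(X_i)} Σ_j ψ_j((ν ∪ {X_i ↦ x})|_{S_j}) — terminates with the value Max(Ψ) = max over total assignments ν of Σ_{⟨S,ψ⟩∈Ψ} ψ(ν|_S). -/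
/-- Total assignments over finite-domain variables. -/
abbrev Asg (X : Type) (D : X → Type) := ∀ x, D x

/-- A scoped function: a scope together with a function on assignments
(which is supposed to depend only on the scope). -/
abbrev Scoped (X : Type) (D : X → Type) := Finset X × (Asg X D → ℝ)

/-- One bucket-elimination step: eliminate the variable `x` by replacing all functions
whose scope contains `x` with the single function
`ψ_x(ν) = max_{a ∈ dom(x)} Σ_j ψ_j(ν[x ↦ a])`, scoped on the union of their scopes minus `x`. -/
noncomputable def elimStep {X : Type} [DecidableEq X] {D : X → Type}
    [∀ x, Fintype (D x)] [∀ x, Nonempty (D x)]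
    (x : X) (Ψ : List (Scoped X D)) : List (Scoped X D) :=
  let Ψ1 := Ψ.filter fun p => decide (x ∈ p.1)
  let Ψ0 := Ψ.filter fun p => decide (x ∉ p.1)
  ⟨(Ψ1.foldr (fun (p : Scoped X D) acc => p.1 ∪ acc) ∅).erase x,
    fun ν => Finset.univ.sup' Finset.univ_nonempty fun a : D x =>
      (Ψ1.map fun p => p.2 (Function.update ν x a)).sum⟩ :: Ψ0

/-- `Max(Ψ)`: the maximum over total assignments of the sum of all scoped functions. -/
noncomputable def MaxPsi {X : Type} {D : X → Type} [Fintype X] [DecidableEq X]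
    [∀ x, Fintype (D x)] [∀ x, Nonempty (D x)] (Ψ : List (Scoped X D)) : ℝ :=
  Finset.univ.sup' Finset.univ_nonempty fun ν : Asg X D => (Ψ.map fun p => p.2 ν).sum

/-!
If every function depends only on its scope, the functions whose scope avoids `x` do not see
the value of `x`, so after eliminating `x` the sum of the list at `ν` is
`max_a Σ_j ψ_j(ν[x ↦ a])`; maximizing this over `ν` is the same as maximizing the old sum.
Each step removes `x` from every scope and introduces no new variable, so once all variables
are eliminated the scopes are empty, the remaining functions are constants, and their sum is
its own maximum.
-/

open Finset

def Scoped.RespectsScope {X : Type} {D : X → Type} (p : Scoped X D) : Prop :=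
  ∀ ν ν' : Asg X D, (∀ x ∈ p.1, ν x = ν' x) → p.2 ν = p.2 ν'

def evalSum {X : Type} {D : X → Type} (Φ : List (Scoped X D)) (ν : Asg X D) : ℝ :=
  (Φ.map fun p => p.2 ν).sum

lemma List.mem_foldr_union_fst {α β : Type*} [DecidableEq α] (L : List (Finset α × β)) (y : α) :
    y ∈ L.foldr (fun p acc => p.1 ∪ acc) ∅ ↔ ∃ p ∈ L, y ∈ p.1 := by
  induction L with
  | nil => simp
  | cons a t ih => simp [ih]

theorem Finset.sup'_univ_sup'_univ_update {α γ : Type*} [Fintype α] [DecidableEq α]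
    {β : α → Type*} [∀ a, Fintype (β a)] [∀ a, Nonempty (β a)] [SemilatticeSup γ]
    (f : (∀ a, β a) → γ) (i : α) :
    (univ.sup' univ_nonempty fun ν => univ.sup' univ_nonempty fun b : β i =>
      f (Function.update ν i b)) = univ.sup' univ_nonempty f := by
  apply le_antisymm
  · exact sup'_le _ _ fun ν _ => sup'_le _ _ fun b _ => le_sup' f (mem_univ _)
  · refine sup'_le _ _ fun ν _ => ?_
    calc f ν = f (Function.update ν i (ν i)) := by rw [Function.update_eq_self]
      _ ≤ univ.sup' univ_nonempty fun b : β i => f (Function.update ν i b) :=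
          le_sup' (fun b : β i => f (Function.update ν i b)) (mem_univ _)
      _ ≤ _ := le_sup' (fun ν => univ.sup' univ_nonempty fun b : β i =>
          f (Function.update ν i b)) (mem_univ ν)

section elimination

variable {X : Type} [DecidableEq X] {D : X → Type} [∀ x, Fintype (D x)] [∀ x, Nonempty (D x)]
  {Φ : List (Scoped X D)}

lemma mem_scope_of_mem_elimStep {x y : X} {p : Scoped X D} (hp : p ∈ elimStep x Φ)
    (hy : y ∈ p.1) : y ≠ x ∧ ∃ q ∈ Φ, y ∈ q.1 := by
  rcases List.mem_cons.mp hp with rfl | hp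
  · obtain ⟨hyx, q, hq, hyq⟩ := (mem_erase.mp hy).imp_right (List.mem_foldr_union_fst _ y).mp
    exact ⟨hyx, q, (List.mem_filter.mp hq).1, hyq⟩
  · obtain ⟨hpΦ, hxp⟩ := List.mem_filter.mp hp
    exact ⟨by rintro rfl; simp_all, p, hpΦ, hy⟩

lemma respectsScope_elimStep (x : X) (hΦ : ∀ p ∈ Φ, p.RespectsScope) :
    ∀ p ∈ elimStep x Φ, p.RespectsScope := by
  intro p hp ν ν' hνν'
  rcases List.mem_cons.mp hp with rfl | hp
  · refine sup'_congr univ_nonempty rfl fun a _ => congrArg List.sum <|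
      List.map_congr_left fun q hq => hΦ q (List.mem_filter.mp hq).1 _ _ fun z hz => ?_
    rcases eq_or_ne z x with rfl | hzx
    · simp
    · simp only [Function.update_of_ne hzx]
      exact hνν' z (mem_erase.mpr ⟨hzx, (List.mem_foldr_union_fst _ z).mpr ⟨q, hq, hz⟩⟩)
  · exact hΦ p (List.mem_filter.mp hp).1 ν ν' hνν'

lemma evalSum_elimStep (x : X) (hΦ : ∀ p ∈ Φ, p.RespectsScope) (ν : Asg X D) :
    evalSum (elimStep x Φ) ν =
      univ.sup' univ_nonempty fun a : D x => evalSum Φ (Function.update ν x a) := by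
  have hrest : ∀ a : D x, ((Φ.filter fun p => decide (x ∉ p.1)).map fun p => p.2 ν).sum
      = ((Φ.filter fun p => decide (x ∉ p.1)).map
          fun p => p.2 (Function.update ν x a)).sum := fun a =>
    congrArg List.sum <| List.map_congr_left fun q hq => by
      obtain ⟨hqΦ, hxq⟩ := List.mem_filter.mp hq
      refine hΦ q hqΦ _ _ fun z hz => ?_
      rw [Function.update_of_ne (by rintro rfl; simp_all)]
  simp only [evalSum, elimStep, List.map_cons, List.sum_cons, sup'_add]
  refine sup'_congr univ_nonempty rfl fun a _ => ?_
  rw [hrest a, List.sum_map_filter_add_sum_map_filter_not]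

lemma respectsScope_foldl_elimStep (σ : List X) (hΦ : ∀ p ∈ Φ, p.RespectsScope) :
    ∀ p ∈ σ.foldl (fun Φ x => elimStep x Φ) Φ, p.RespectsScope := by
  induction σ generalizing Φ with
  | nil => exact hΦ
  | cons x σ ih => exact ih (respectsScope_elimStep x hΦ)

lemma notMem_scope_foldl_elimStep (σ : List X) {y : X} (hy : ∀ p ∈ Φ, y ∉ p.1) :
    ∀ p ∈ σ.foldl (fun Φ x => elimStep x Φ) Φ, y ∉ p.1 := by
  induction σ generalizing Φ with
  | nil => exact hy
  | cons x σ ih =>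
    refine ih fun p hp hyp => ?_
    obtain ⟨-, q, hq, hyq⟩ := mem_scope_of_mem_elimStep hp hyp
    exact hy q hq hyq

lemma notMem_scope_foldl_elimStep_of_mem {σ : List X} {y : X} (hy : y ∈ σ) :
    ∀ p ∈ σ.foldl (fun Φ x => elimStep x Φ) Φ, y ∉ p.1 := by
  obtain ⟨s, t, rfl⟩ := List.append_of_mem hy
  rw [List.foldl_append, List.foldl_cons]
  exact notMem_scope_foldl_elimStep t fun p hp hyp => (mem_scope_of_mem_elimStep hp hyp).1 rfl

variable [Fintype X]

lemma maxPsi_elimStep (x : X) (hΦ : ∀ p ∈ Φ, p.RespectsScope) :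
    MaxPsi (elimStep x Φ) = MaxPsi Φ := by
  change univ.sup' _ (evalSum _) = univ.sup' _ (evalSum _)
  simp only [evalSum_elimStep x hΦ]
  exact sup'_univ_sup'_univ_update (evalSum Φ) x

lemma maxPsi_foldl_elimStep (σ : List X) (hΦ : ∀ p ∈ Φ, p.RespectsScope) :
    MaxPsi (σ.foldl (fun Φ x => elimStep x Φ) Φ) = MaxPsi Φ := by
  induction σ generalizing Φ with
  | nil => rfl
  | cons x σ ih =>
    rw [List.foldl_cons, ih (respectsScope_elimStep x hΦ), maxPsi_elimStep x hΦ]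

lemma evalSum_eq_maxPsi_of_scopes_empty (hΦ : ∀ p ∈ Φ, p.RespectsScope)
    (hempty : ∀ p ∈ Φ, ∀ y, y ∉ p.1) (ν₀ : Asg X D) : evalSum Φ ν₀ = MaxPsi Φ := by
  have hconst : ∀ ν, evalSum Φ ν = evalSum Φ ν₀ := fun ν =>
    congrArg List.sum <| List.map_congr_left fun p hp =>
      hΦ p hp ν ν₀ fun y hy => absurd hy (hempty p hp y)
  change _ = univ.sup' _ (evalSum Φ)
  simp only [hconst, sup'_const]

end elimination

theorem stmt8_general {X : Type} [Fintype X] [DecidableEq X] {D : X → Type}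
    [∀ x, Fintype (D x)] [∀ x, Nonempty (D x)]
    (Ψ : List (Scoped X D))
    (hscope : ∀ p ∈ Ψ, ∀ ν ν' : Asg X D, (∀ x ∈ p.1, ν x = ν' x) → p.2 ν = p.2 ν')
    (σ : List X) (hall : ∀ x : X, x ∈ σ) :
    ∀ ν₀ : Asg X D,
      ((σ.foldl (fun Φ x => elimStep x Φ) Ψ).map fun p => p.2 ν₀).sum = MaxPsi Ψ := by
  intro ν₀
  rw [← maxPsi_foldl_elimStep σ hscope]
  exact evalSum_eq_maxPsi_of_scopes_empty (respectsScope_foldl_elimStep σ hscope)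
    (fun p hp y => notMem_scope_foldl_elimStep_of_mem (hall y) p hp) ν₀

/-- Bucket elimination, processing the variables in any order `σ` covering all variables,
terminates with the value `Max(Ψ)` (the remaining functions are constants; their sum,
evaluated at an arbitrary assignment `ν₀`, equals `Max(Ψ)`). -/
theorem stmt8 {X : Type} [Fintype X] [DecidableEq X] {D : X → Type}
    [∀ x, Fintype (D x)] [∀ x, Nonempty (D x)]
    (Ψ : List (Scoped X D))
    (hscope : ∀ p ∈ Ψ, ∀ ν ν' : Asg X D, (∀ x ∈ p.1, ν x = ν' x) → p.2 ν = p.2 ν')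
    (σ : List X) (hnodup : σ.Nodup) (hall : ∀ x : X, x ∈ σ) :
    ∀ ν₀ : Asg X D,
      ((σ.foldl (fun Φ x => elimStep x Φ) Ψ).map fun p => p.2 ν₀).sum = MaxPsi Ψ :=
  stmt8_general Ψ hscope σ hall
end

section
/- Correctness of a single elimination step: for any partition of Ψ into Ψ_1 (functions whose scope contains variable X) and Ψ_0 (the rest), max_{ν ∈ dom(X̄)} [ Σ_{⟨S,ψ⟩∈Ψ_0} ψ(ν|_S) + max_{x ∈ dom(X)} Σ_{⟨S,ψ⟩∈Ψ_1} ψ((ν∪{X↦x})|_S) ] = Max(Ψ), where X̄ = X-variables minus {X}. -/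
/-- Correctness of a single bucket-elimination step: if `Ψ1` are the scoped functions whose
scope contains `X` and `Ψ0` the rest (which do not depend on the coordinate `X`), then
maximizing out `X` inside and then maximizing over the remaining assignment yields `Max(Ψ)`. -/
theorem stmt9 {X : Type} [Fintype X] [DecidableEq X] {D : X → Type}
    [∀ x, Fintype (D x)] [∀ x, Nonempty (D x)]
    (x : X) (Ψ0 Ψ1 : List (Finset X × (Asg X D → ℝ)))
    (h1 : ∀ p ∈ Ψ1, x ∈ p.1)
    (h0 : ∀ p ∈ Ψ0, x ∉ p.1)
    (hscope0 : ∀ p ∈ Ψ0, ∀ (ν : Asg X D) (a : D x), p.2 (Function.update ν x a) = p.2 ν) :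
    (Finset.univ.sup' Finset.univ_nonempty fun ν : Asg X D =>
        (Ψ0.map fun p => p.2 ν).sum +
          Finset.univ.sup' Finset.univ_nonempty fun a : D x =>
            (Ψ1.map fun p => p.2 (Function.update ν x a)).sum) =
      Finset.univ.sup' Finset.univ_nonempty fun ν : Asg X D =>
        ((Ψ0 ++ Ψ1).map fun p => p.2 ν).sum := by
  have hsum0 : ∀ (ν : Asg X D) (a : D x),
      (Ψ0.map fun p => p.2 (Function.update ν x a)).sum = (Ψ0.map fun p => p.2 ν).sum := by
    intro ν a
    congr 1
    exact List.map_congr_left fun p hp => hscope0 p hp ν a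
  apply le_antisymm
  · apply Finset.sup'_le
    intro ν _
    rw [Finset.add_sup']
    apply Finset.sup'_le
    intro a _
    calc (Ψ0.map fun p => p.2 ν).sum + (Ψ1.map fun p => p.2 (Function.update ν x a)).sum
        = ((Ψ0 ++ Ψ1).map fun p => p.2 (Function.update ν x a)).sum := by
          rw [List.map_append, List.sum_append, hsum0]
      _ ≤ _ := Finset.le_sup' (fun ν : Asg X D => ((Ψ0 ++ Ψ1).map fun p => p.2 ν).sum)
          (Finset.mem_univ (Function.update ν x a))
  · apply Finset.sup'_le
    intro ν _
    have h : ((Ψ0 ++ Ψ1).map fun p => p.2 ν).sum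
        = (Ψ0.map fun p => p.2 ν).sum + (Ψ1.map fun p => p.2 (Function.update ν x (ν x))).sum := by
      rw [List.map_append, List.sum_append, Function.update_eq_self]
    rw [h]
    have h2 : (Ψ1.map fun p => p.2 (Function.update ν x (ν x))).sum ≤
        Finset.univ.sup' Finset.univ_nonempty fun a : D x =>
          (Ψ1.map fun p => p.2 (Function.update ν x a)).sum :=
      Finset.le_sup' (fun a : D x => (Ψ1.map fun p => p.2 (Function.update ν x a)).sum)
        (Finset.mem_univ (ν x))
    exact le_trans (by linarith)
      (Finset.le_sup' (fun ν : Asg X D => (Ψ0.map fun p => p.2 ν).sum +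
        Finset.univ.sup' Finset.univ_nonempty fun a : D x =>
          (Ψ1.map fun p => p.2 (Function.update ν x a)).sum) (Finset.mem_univ ν))
end

section
/- In the reduction task built from a graph G = (V,E) — with one three-valued color variable C_v per vertex, one binary master variable M, zero-cost operators changing any C_v when M = 0 and a zero-cost operator o_M setting M from 0 to 1, and potential weights w(f) = −1 for size-3 features {(M,1),(C_u,c),(C_v,c')} with {u,v} ∈ E and c ≠ c', w((M,1)) = |E| − 1, and 0 otherwise — the following hold: (a) φ(s) = 0 for all states with s[M] = 0; (b) for all states s with s[M] = 1, φ(s) ≥ −1, with equality iff s encodes a proper 3-coloring of G; (c) the heuristic φ is consistent iff G is not 3-colorable. -/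
attribute [local instance] Classical.propDecidable

/-- The potential heuristic of the non-3-colorability reduction task for the graph with
vertex set `Vtx` and edge set `E`. States are pairs of a coloring and the value of the
master variable `M`. The feature `(M,1)` has weight `|E| − 1`; each size-3 feature
`{(M,1),(C_u,c),(C_v,c')}` with `{u,v} ∈ E` and `c ≠ c'` has weight `−1`;
all other features have weight `0`. -/
noncomputable def phiRed {Vtx : Type} [Fintype Vtx] [DecidableEq Vtx]
    (E : Finset (Vtx × Vtx)) (s : (Vtx → Fin 3) × Bool) : ℝ :=
  (if s.2 = true then ((E.card : ℝ) - 1) else 0) +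
    ∑ e ∈ E, ∑ c : Fin 3, ∑ c' : Fin 3,
      if c ≠ c' ∧ s.2 = true ∧ s.1 e.1 = c ∧ s.1 e.2 = c' then (-1 : ℝ) else 0

lemma aux3 (a b : Fin 3) :
    (∑ c : Fin 3, ∑ c' : Fin 3, if c ≠ c' ∧ a = c ∧ b = c' then (-1 : ℝ) else 0)
      = if a = b then 0 else -1 := by
  fin_cases a <;> fin_cases b <;> simp [Fin.sum_univ_three]

lemma phiFalse {Vtx : Type} [Fintype Vtx] [DecidableEq Vtx]
    (E : Finset (Vtx × Vtx)) (κ : Vtx → Fin 3) : phiRed E (κ, false) = 0 := by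
  simp [phiRed]

lemma phiTrue {Vtx : Type} [Fintype Vtx] [DecidableEq Vtx]
    (E : Finset (Vtx × Vtx)) (κ : Vtx → Fin 3) :
    phiRed E (κ, true) = ((E.filter (fun e => κ e.1 = κ e.2)).card : ℝ) - 1 := by
  classical
  have h1 : ∀ e ∈ E, (∑ c : Fin 3, ∑ c' : Fin 3,
      if c ≠ c' ∧ True ∧ κ e.1 = c ∧ κ e.2 = c' then (-1 : ℝ) else 0)
      = if κ e.1 = κ e.2 then 0 else -1 := by
    intro e _
    simpa using aux3 (κ e.1) (κ e.2)
  have h2 : (∑ e ∈ E, if κ e.1 = κ e.2 then (0:ℝ) else -1)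
      = ((E.filter (fun e => κ e.1 = κ e.2)).card : ℝ) - (E.card : ℝ) := by
    rw [Finset.sum_ite, Finset.sum_const, Finset.sum_const]
    have := Finset.card_filter_add_card_filter_not
      (s := E) (p := fun e => κ e.1 = κ e.2)
    push_cast [← this]
    ring
  simp only [phiRed, eq_self_iff_true, if_true]
  rw [Finset.sum_congr rfl h1, h2]
  ring

/-- In the reduction task:
(a) `φ(s) = 0` for all states with `s[M] = 0`;
(b) `φ(s) ≥ −1` for all states with `s[M] = 1`, with equality iff `s` encodes a proper
3-coloring;
(c) `φ` is consistent (all operators — recoloring a vertex when `M = 0`, and setting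
`M` from 0 to 1 — have cost 0, so consistency means `φ` never increases along a
transition) iff the graph is not 3-colorable. -/
theorem stmt13 {Vtx : Type} [Fintype Vtx] [DecidableEq Vtx]
    (E : Finset (Vtx × Vtx)) (hE : ∀ e ∈ E, e.1 ≠ e.2) :
    (∀ κ : Vtx → Fin 3, phiRed E (κ, false) = 0) ∧
    (∀ κ : Vtx → Fin 3,
      (-1 : ℝ) ≤ phiRed E (κ, true) ∧
      (phiRed E (κ, true) = -1 ↔ ∀ e ∈ E, κ e.1 ≠ κ e.2)) ∧
    (((∀ (κ : Vtx → Fin 3) (v : Vtx) (x : Fin 3),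
          phiRed E (κ, false) ≤ phiRed E (Function.update κ v x, false)) ∧
        (∀ κ : Vtx → Fin 3, phiRed E (κ, false) ≤ phiRed E (κ, true))) ↔
      ¬ ∃ κ : Vtx → Fin 3, ∀ e ∈ E, κ e.1 ≠ κ e.2) := by
  classical
  refine ⟨phiFalse E, fun κ => ?_, ?_⟩
  · rw [phiTrue]
    constructor
    · have : (0:ℝ) ≤ ((E.filter (fun e => κ e.1 = κ e.2)).card : ℝ) := by positivity
      linarith
    · constructor
      · intro h e he hcon
        have hc : (E.filter (fun e => κ e.1 = κ e.2)).card = 0 := by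
          have h' : ((E.filter (fun e => κ e.1 = κ e.2)).card : ℝ) = 0 := by linarith
          exact_mod_cast h'
        have hempty : E.filter (fun e => κ e.1 = κ e.2) = ∅ :=
          Finset.card_eq_zero.mp hc
        have : e ∈ E.filter (fun e => κ e.1 = κ e.2) :=
          Finset.mem_filter.mpr ⟨he, hcon⟩
        simp [hempty] at this
      · intro h
        have : E.filter (fun e => κ e.1 = κ e.2) = ∅ := by
          apply Finset.filter_eq_empty_iff.mpr
          intro e he; exact h e he
        simp [this]
  · constructor
    · rintro ⟨_, h2⟩ ⟨κ, hκ⟩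
      have hfil : E.filter (fun e => κ e.1 = κ e.2) = ∅ :=
        Finset.filter_eq_empty_iff.mpr (fun e he => hκ e he)
      have := h2 κ
      rw [phiFalse, phiTrue, hfil] at this
      norm_num at this
    · intro h
      refine ⟨fun κ v x => by rw [phiFalse, phiFalse], fun κ => ?_⟩
      rw [phiFalse, phiTrue]
      have hne : (E.filter (fun e => κ e.1 = κ e.2)).Nonempty := by
        by_contra hc
        exact h ⟨κ, fun e he hcon => hc ⟨e, Finset.mem_filter.mpr ⟨he, hcon⟩⟩⟩
      have : 1 ≤ (E.filter (fun e => κ e.1 = κ e.2)).card := Finset.card_pos.mpr hne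
      have : (1:ℝ) ≤ ((E.filter (fun e => κ e.1 = κ e.2)).card : ℝ) := by exact_mod_cast this
      linarith
end

section
/- In the non-3-colorability reduction task, for every state s with s[M] = 1, the sum over edge-features evaluates as follows: Σ_{{u,v}∈E} Σ_{c≠c'} (−1)·[s ⊨ {(M,1),(C_u,c),(C_v,c')}] = −|{{u,v} ∈ E : s[C_u] ≠ s[C_v]}| ≥ −|E|, with equality to −|E| iff s encodes a proper 3-coloring; hence φ(s) = (|E|−1) − |{properly colored edges under s}|. -/
attribute [local instance] Classical.propDecidable

lemma sum_sum_ite_ne_and_eq {α M : Type*} [Fintype α] [DecidableEq α] [AddCommMonoid M]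
    (a b : α) (x : M) :
    (∑ c : α, ∑ c' : α, if c ≠ c' ∧ a = c ∧ b = c' then x else 0) =
      if a ≠ b then x else 0 := by
  have key : ∀ c c' : α, (c ≠ c' ∧ a = c ∧ b = c') ↔ (a = c ∧ b = c' ∧ a ≠ b) := by
    rintro c c'
    constructor
    · rintro ⟨hne, rfl, rfl⟩; exact ⟨rfl, rfl, hne⟩
    · rintro ⟨rfl, rfl, hne⟩; exact ⟨hne, rfl, rfl⟩
  simp [key, ite_and]

lemma sum_ite_ne_colors_eq_neg_card_filter {V α : Type*} [Fintype α] [DecidableEq α]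
    (E : Finset (V × V)) (κ : V → α) :
    (∑ e ∈ E, ∑ c : α, ∑ c' : α,
        if c ≠ c' ∧ κ e.1 = c ∧ κ e.2 = c' then (-1 : ℝ) else 0) =
      -(((E.filter fun e => κ e.1 ≠ κ e.2).card : ℝ)) := by
  simp only [sum_sum_ite_ne_and_eq, Finset.natCast_card_filter, ← Finset.sum_neg_distrib,
    neg_ite, neg_zero]

theorem stmt14_general {Vtx : Type} [Fintype Vtx] [DecidableEq Vtx]
    (E : Finset (Vtx × Vtx)) (κ : Vtx → Fin 3) :
    (∑ e ∈ E, ∑ c : Fin 3, ∑ c' : Fin 3,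
        if c ≠ c' ∧ κ e.1 = c ∧ κ e.2 = c' then (-1 : ℝ) else 0) =
      -(((E.filter fun e => κ e.1 ≠ κ e.2).card : ℝ)) ∧
    -((E.card : ℝ)) ≤
      -(((E.filter fun e => κ e.1 ≠ κ e.2).card : ℝ)) ∧
    (-(((E.filter fun e => κ e.1 ≠ κ e.2).card : ℝ)) = -((E.card : ℝ)) ↔
      ∀ e ∈ E, κ e.1 ≠ κ e.2) ∧
    phiRed E (κ, true) =
      ((E.card : ℝ) - 1) - ((E.filter fun e => κ e.1 ≠ κ e.2).card : ℝ) := by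
  have hsum := sum_ite_ne_colors_eq_neg_card_filter E κ
  refine ⟨hsum, ?_, ?_, ?_⟩
  · exact neg_le_neg (mod_cast Finset.card_filter_le E _)
  · rw [neg_inj, Nat.cast_inj, Finset.card_filter_eq_iff]
  · simp only [phiRed, if_true, true_and, hsum]
    ring

/-- In the reduction task, for every state with `s[M] = 1` and coloring `κ`, the sum over
the edge-features equals minus the number of properly colored edges; it is at least
`−|E|`, with equality iff `κ` is a proper 3-coloring; and hence
`φ(s) = (|E| − 1) − |{properly colored edges}|`. -/
theorem stmt14 {Vtx : Type} [Fintype Vtx] [DecidableEq Vtx]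
    (E : Finset (Vtx × Vtx)) (hE : ∀ e ∈ E, e.1 ≠ e.2) (κ : Vtx → Fin 3) :
    (∑ e ∈ E, ∑ c : Fin 3, ∑ c' : Fin 3,
        if c ≠ c' ∧ κ e.1 = c ∧ κ e.2 = c' then (-1 : ℝ) else 0) =
      -(((E.filter fun e => κ e.1 ≠ κ e.2).card : ℝ)) ∧
    -((E.card : ℝ)) ≤
      -(((E.filter fun e => κ e.1 ≠ κ e.2).card : ℝ)) ∧
    (-(((E.filter fun e => κ e.1 ≠ κ e.2).card : ℝ)) = -((E.card : ℝ)) ↔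
      ∀ e ∈ E, κ e.1 ≠ κ e.2) ∧
    phiRed E (κ, true) =
      ((E.card : ℝ) - 1) - ((E.filter fun e => κ e.1 ≠ κ e.2).card : ℝ) :=
  stmt14_general E κ
end

section
/- Given a transition cost partitioning cost_1, …, cost_n (i.e., Σ_i cost_i(t) ≤ cost(o) for every transition t labeled o) and heuristics h_1, …, h_n such that each h_i(s, cost_i) is a lower bound on the cheapest cost of an s-plan under the transition cost function cost_i, the sum h_P(s) = Σ_i h_i(s, cost_i) is admissible: h_P(s) ≤ h*(s, cost) for every state s. -/
def IsPath {S O : Type} (T : Set (S × O × S)) (g : S) : S → List (S × O × S) → Prop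
  | s, [] => s = g
  | s, t :: ts => t.1 = s ∧ t ∈ T ∧ IsPath T g t.2.2 ts

/-- Cost of a path under a transition cost function. -/
noncomputable def tPathCost {S O : Type} (c : S × O × S → ℝ) (π : List (S × O × S)) : ℝ :=
  (π.map c).sum

/-- `h*(s, c)`: infimum (in `EReal`) of path costs from `s` to the goal under the
transition cost function `c`; `+∞` if no path exists (it may be `−∞`). -/
noncomputable def hstarT {S O : Type} (T : Set (S × O × S)) (g : S)
    (c : S × O × S → ℝ) (s : S) : EReal :=
  sInf {x : EReal | ∃ π : List (S × O × S), IsPath T g s π ∧ x = ((tPathCost c π : ℝ) : EReal)}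

lemma isPath_mem {S O : Type} (T : Set (S × O × S)) (g : S) :
    ∀ (π : List (S × O × S)) (s : S), IsPath T g s π → ∀ t ∈ π, t ∈ T := by
  intro π
  induction π with
  | nil => intro s _ t ht; simp at ht
  | cons a l ih =>
    intro s hp t ht
    obtain ⟨_, haT, hrest⟩ := hp
    rcases List.mem_cons.mp ht with ht | ht
    · exact ht ▸ haT
    · exact ih _ hrest t ht

lemma sum_tPathCost_le {S O : Type} (T : Set (S × O × S)) (cost : O → ℝ)
    (n : ℕ) (c : Fin n → S × O × S → ℝ)
    (hpart : ∀ t ∈ T, ∑ i, c i t ≤ cost t.2.1) :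
    ∀ (π : List (S × O × S)), (∀ t ∈ π, t ∈ T) →
      ∑ i, tPathCost (c i) π ≤ tPathCost (fun t => cost t.2.1) π := by
  intro π
  induction π with
  | nil => intro _; simp [tPathCost]
  | cons a l ih =>
    intro hmem
    have h1 : ∑ i, tPathCost (c i) (a :: l)
        = (∑ i, c i a) + ∑ i, tPathCost (c i) l := by
      simp [tPathCost, Finset.sum_add_distrib]
    rw [h1]
    have h2 : tPathCost (fun t => cost t.2.1) (a :: l)
        = cost a.2.1 + tPathCost (fun t => cost t.2.1) l := by
      simp [tPathCost]
    rw [h2]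
    exact add_le_add (hpart a (hmem a (by simp))) (ih fun t ht => hmem t (by simp [ht]))

/-- Admissibility of transition cost partitioning: if `cost_1, …, cost_n` is a transition
cost partitioning and each `h_i(s)` is a lower bound on the cheapest cost of an `s`-plan
under `cost_i`, then `Σ_i h_i(s) ≤ h*(s, cost)`. -/
theorem stmt15 {S O : Type} (T : Set (S × O × S)) (cost : O → ℝ) (g : S)
    (hcost : ∀ o : O, 0 ≤ cost o)
    (n : ℕ) (c : Fin n → S × O × S → ℝ)
    (hpart : ∀ t ∈ T, ∑ i, c i t ≤ cost t.2.1)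
    (h : Fin n → S → EReal)
    (hlb : ∀ i s, h i s ≤ hstarT T g (c i) s) :
    ∀ s : S, ∑ i, h i s ≤ hstarT T g (fun t => cost t.2.1) s := by
  intro s
  apply le_sInf
  rintro x ⟨π, hπ, rfl⟩
  calc ∑ i, h i s ≤ ∑ i, ((tPathCost (c i) π : ℝ) : EReal) :=
        Finset.sum_le_sum fun i _ => (hlb i s).trans (sInf_le ⟨π, hπ, rfl⟩)
    _ = ((∑ i, tPathCost (c i) π : ℝ) : EReal) := (map_sum (⟨⟨Real.toEReal, EReal.coe_zero⟩, EReal.coe_add⟩ : ℝ →+ EReal) _ _).symm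
    _ ≤ _ := EReal.coe_le_coe_iff.2
        (sum_tPathCost_le T cost n c hpart π (isPath_mem T g π s hπ))
end

section
/- The optimal transition cost partitioning heuristic dominates the optimal operator cost partitioning heuristic: for any state s and admissible heuristics h_1,…,h_n, max over transition cost partitionings P of Σ_i h_i(s, cost_i) ≥ max over operator cost partitionings P' of Σ_i h_i(s, cost'_i), since every operator cost partitioning (assigning each operator's cost uniformly to all its transitions) is a transition cost partitioning. -/
/-- The optimal transition cost partitioning heuristic dominates the optimal operator
cost partitioning heuristic: every operator cost partitioning, assigning each operator's
share uniformly to all its transitions, is a transition cost partitioning, so the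
supremum over transition cost partitionings of the summed heuristic values is at least
the supremum over operator cost partitionings. `H i s c` denotes `h_i(s, c)`, the value
of heuristic `i` at state `s` under transition cost function `c`. -/
theorem stmt16 {S O : Type} (T : Set (S × O × S)) (cost : O → ℝ)
    (hcost : ∀ o : O, 0 ≤ cost o) (n : ℕ)
    (H : Fin n → S → (S × O × S → ℝ) → EReal) (s : S) :
    sSup {x : EReal | ∃ c' : Fin n → O → ℝ,
        (∀ o : O, ∑ i, c' i o ≤ cost o) ∧
        x = ∑ i, H i s (fun t => c' i t.2.1)} ≤
    sSup {x : EReal | ∃ c : Fin n → S × O × S → ℝ,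
        (∀ t ∈ T, ∑ i, c i t ≤ cost t.2.1) ∧
        x = ∑ i, H i s (c i)} := by
  apply sSup_le_sSup
  rintro x ⟨c', hc', rfl⟩
  exact ⟨fun i t => c' i t.2.1, fun t _ => hc' t.2.1, rfl⟩
end
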